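/- Let p : ℕ → ℝ be a sequence with p_0 = 1 such that (-1)^{k+1} p_k ≥ 0 for all k ≥ 1. Define the operation (D p)_k := -p_{k+1} + p_1 · p_k. Then for every k ≥ 1 and every iterate s ≥ 0, (-1)^{k+1} (D^s p)_k ≥ 0, where D^s denotes the s-fold application of D (with (D p)_0 := -p_1). -/
import Mathlib


/-- The Ricci-flow evolution operation on the sequence of rescaled renormalized
volume coefficients: `(D p)_0 = -p 1`, `(D p)_{k+1} = -p (k+2) + p 1 * p (k+1)`. -/
def Dop (p : ℕ → ℝ) : ℕ → ℝ
  | 0 => -p 1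
  | (k + 1) => -p (k + 2) + p 1 * p (k + 1)

lemma Dop_preserves (q : ℕ → ℝ)
    (hq : ∀ k, 1 ≤ k → 0 ≤ (-1 : ℝ) ^ (k + 1) * q k) :
    ∀ k, 1 ≤ k → 0 ≤ (-1 : ℝ) ^ (k + 1) * Dop q k := by
  intro k hk
  obtain ⟨n, rfl⟩ : ∃ n, k = n + 1 := ⟨k - 1, by omega⟩
  have h1 : (0 : ℝ) ≤ q 1 := by simpa using hq 1 le_rfl
  have h2 := hq (n + 2) (by omega)
  have h3 := hq (n + 1) (by omega)
  have heq : (-1 : ℝ) ^ (n + 1 + 1) * Dop q (n + 1)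
      = (-1) ^ (n + 2 + 1) * q (n + 2) + q 1 * ((-1) ^ (n + 1 + 1) * q (n + 1)) := by
    simp only [Dop, pow_succ]
    ring
  rw [heq]
  exact add_nonneg h2 (mul_nonneg h1 h3)

/-- the cone `Λ^{∞,-}` is preserved under all iterates of `D`. -/
theorem stmt5 (p : ℕ → ℝ) (h0 : p 0 = 1)
    (h : ∀ k, 1 ≤ k → 0 ≤ (-1 : ℝ) ^ (k + 1) * p k) :
    ∀ s k, 1 ≤ k → 0 ≤ (-1 : ℝ) ^ (k + 1) * (Dop^[s] p) k := by
  intro s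
  induction s with
  | zero => simpa using h
  | succ n ih =>
      intro k hk
      rw [Function.iterate_succ_apply']
      exact Dop_preserves _ ih k hk
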